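/- arXiv:0901.1129 — 3 statements merged into one kernel-verified Lean document; each statement's English description precedes it below -/
import Mathlib

section
/- The expansion of f_4(t) = (1344/25)t⁹ - (2688/25)t⁷ + (1764/25)t⁵ + (2048/125)t⁴ - (1229/125)t³ - (516/125)t² - (217/500)t - 2/125 in terms of the Gegenbauer polynomials U_k = G_k^{(4)} is f_4 = U_0 + 2U_1 + (153/25)U_2 + (871/250)U_3 + (128/25)U_4 + (21/20)U_9; in particular all coefficients are nonnegative and the constant coefficient is 1. -/
open Polynomial

/-- The Gegenbauer polynomials `G_k^{(n)}`, normalized by `G_k^{(n)}(1) = 1`. -/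
noncomputable def gegenbauer (n : ℕ) : ℕ → Polynomial ℝ
  | 0 => 1
  | 1 => X
  | (k + 2) =>
      C ((((k : ℝ) + 2) + n - 3)⁻¹) *
        (C (2 * ((k : ℝ) + 2) + n - 4) * X * gegenbauer n (k + 1)
          - C (((k : ℝ) + 2) - 1) * gegenbauer n k)

/-- Musin's polynomial `f_4` for the kissing number problem in dimension 4. -/
noncomputable def f4 : Polynomial ℝ :=
  C (1344 / 25) * X ^ 9 - C (2688 / 25) * X ^ 7 + C (1764 / 25) * X ^ 5
    + C (2048 / 125) * X ^ 4 - C (1229 / 125) * X ^ 3 - C (516 / 125) * X ^ 2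
    - C (217 / 500) * X - C (2 / 125)

lemma grec (n k : ℕ) :
    gegenbauer n (k + 2) =
      C ((((k : ℝ) + 2) + n - 3)⁻¹) *
        (C (2 * ((k : ℝ) + 2) + n - 4) * X * gegenbauer n (k + 1)
          - C (((k : ℝ) + 2) - 1) * gegenbauer n k) := by
  rw [gegenbauer]

lemma geval (n k : ℕ) (x : ℝ) :
    eval x (gegenbauer n (k + 2)) =
      ((((k : ℝ) + 2) + n - 3)⁻¹) *
        ((2 * ((k : ℝ) + 2) + n - 4) * x * eval x (gegenbauer n (k + 1))
          - (((k : ℝ) + 2) - 1) * eval x (gegenbauer n k)) := by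
  rw [grec]; simp

/-- The Gegenbauer expansion of `f_4` in terms of `U_k = G_k^{(4)}`:
`f_4 = U_0 + 2U_1 + (153/25)U_2 + (871/250)U_3 + (128/25)U_4 + (21/20)U_9`. -/
theorem f4_gegenbauer_expansion :
    f4 = gegenbauer 4 0 + C 2 * gegenbauer 4 1 + C (153 / 25) * gegenbauer 4 2
      + C (871 / 250) * gegenbauer 4 3 + C (128 / 25) * gegenbauer 4 4
      + C (21 / 20) * gegenbauer 4 9 := by
  apply Polynomial.funext
  intro x
  have h0 : eval x (gegenbauer 4 0) = 1 := by simp [gegenbauer]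
  have h1 : eval x (gegenbauer 4 1) = x := by simp [gegenbauer]
  have h2 : eval x (gegenbauer 4 2) = (4/3) * x ^ 2 - (1/3) := by
    rw [show gegenbauer 4 2 = gegenbauer 4 (0 + 2) from rfl, geval, h1, h0]; push_cast; norm_num; ring
  have h3 : eval x (gegenbauer 4 3) = 2 * x ^ 3 + -1 * x := by
    rw [show gegenbauer 4 3 = gegenbauer 4 (1 + 2) from rfl, geval, h2, h1]; push_cast; norm_num; ring
  have h4 : eval x (gegenbauer 4 4) = (16/5) * x ^ 4 - (12/5) * x ^ 2 + (1/5) := by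
    rw [show gegenbauer 4 4 = gegenbauer 4 (2 + 2) from rfl, geval, h3, h2]; push_cast; norm_num; ring
  have h5 : eval x (gegenbauer 4 5) = (16/3) * x ^ 5 - (16/3) * x ^ 3 + 1 * x := by
    rw [show gegenbauer 4 5 = gegenbauer 4 (3 + 2) from rfl, geval, h4, h3]; push_cast; norm_num; ring
  have h6 : eval x (gegenbauer 4 6) = (64/7) * x ^ 6 - (80/7) * x ^ 4 + (24/7) * x ^ 2 - (1/7) := by
    rw [show gegenbauer 4 6 = gegenbauer 4 (4 + 2) from rfl, geval, h5, h4]; push_cast; norm_num; ring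
  have h7 : eval x (gegenbauer 4 7) = 16 * x ^ 7 + -24 * x ^ 5 + 10 * x ^ 3 + -1 * x := by
    rw [show gegenbauer 4 7 = gegenbauer 4 (5 + 2) from rfl, geval, h6, h5]; push_cast; norm_num; ring
  have h8 : eval x (gegenbauer 4 8) = (256/9) * x ^ 8 - (448/9) * x ^ 6 + (80/3) * x ^ 4 - (40/9) * x ^ 2 + (1/9) := by
    rw [show gegenbauer 4 8 = gegenbauer 4 (6 + 2) from rfl, geval, h7, h6]; push_cast; norm_num; ring
  have h9 : eval x (gegenbauer 4 9) = (256/5) * x ^ 9 - (512/5) * x ^ 7 + (336/5) * x ^ 5 + -16 * x ^ 3 + 1 * x := by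
    rw [show gegenbauer 4 9 = gegenbauer 4 (7 + 2) from rfl, geval, h8, h7]; push_cast; norm_num; ring
  simp only [f4, eval_add, eval_sub, eval_mul, eval_pow, eval_C, eval_X, h0, h1, h2, h3, h4, h9]
  ring
end

section
/- Let S ⊂ S^{n-1} be a spherical two-distance set with inner products a and b between distinct points, where -1 ≤ b < a < 1 and a + b ≥ 0. Then |S| ≤ n(n+1)/2. -/
/-!
For each `x ∈ S` the function `y ↦ (⟪x, y⟫ - a) (⟪x, y⟫ - b)`, homogenized to a quadratic plus
a linear form, vanishes at every other point of `S` and equals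
`(1 - a)(1 - b) > 0` at `x`. These `|S|` functions together with the `n` coordinate functions are
linearly independent: the odd part of a vanishing combination forces its linear part to be
`(a + b) ⟪e, ·⟫` with `e = ∑ cₓ x`, and evaluating at the points of `S` then gives
`(1 - a)(1 - b) ∑ cₓ² = -(a + b) ‖e‖² ≤ 0`. All of them lie in the span of the
`n(n+1)/2` quadratic and `n` linear monomials, so `|S| + n ≤ n(n+1)/2 + n`.
-/

open RealInnerProductSpace Finset

theorem LinearIndependent.card_le_card_of_range_subset_span {R M ι κ : Type*} [Semiring R]
    [StrongRankCondition R] [AddCommMonoid M] [Module R M] [Fintype ι] [Fintype κ]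
    {v : ι → M} {w : κ → M} (hv : LinearIndependent R v)
    (hvw : Set.range v ⊆ Submodule.span R (Set.range w)) :
    Fintype.card ι ≤ Fintype.card κ := by
  classical
  exact (linearIndependent_le_span_aux' v hv _ hvw).trans (Fintype.card_range_le w)

section InnerProductSpace

variable {E : Type*} [NormedAddCommGroup E] [InnerProductSpace ℝ E]

/-- The constant `ab` of `(⟪x, y⟫ - a) (⟪x, y⟫ - b)` is replaced by `ab ‖y‖²`, which does not
change the values on the unit sphere but leaves no constant term. -/
def twoDistancePoly (a b : ℝ) (x y : E) : ℝ :=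
  ⟪x, y⟫ ^ 2 - (a + b) * ⟪x, y⟫ + a * b * ⟪y, y⟫

theorem twoDistancePoly_of_norm_eq_one (a b : ℝ) (x : E) {y : E} (hy : ‖y‖ = 1) :
    twoDistancePoly a b x y = (⟪x, y⟫ - a) * (⟪x, y⟫ - b) := by
  rw [twoDistancePoly, real_inner_self_eq_norm_sq, hy]
  ring

theorem twoDistancePoly_sub_neg (a b : ℝ) (x y : E) :
    twoDistancePoly a b x y - twoDistancePoly a b x (-y) = -2 * (a + b) * ⟪x, y⟫ := by
  simp only [twoDistancePoly, inner_neg_left, inner_neg_right, neg_neg]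
  ring

variable {ι : Type*} [Fintype ι] {x : ι → E} {a b : ℝ}

theorem eq_inner_of_sum_twoDistancePoly_add_eq_zero (c : ι → ℝ) {ℓ : E → ℝ}
    (hℓ : ∀ y, ℓ (-y) = -ℓ y) (h : ∀ y, ∑ i, c i * twoDistancePoly a b (x i) y + ℓ y = 0)
    (y : E) : ℓ y = (a + b) * ⟪∑ i, c i • x i, y⟫ := by
  have hsub : ∑ i, c i * twoDistancePoly a b (x i) y - ∑ i, c i * twoDistancePoly a b (x i) (-y)
      = -2 * (a + b) * ⟪∑ i, c i • x i, y⟫ := by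
    rw [← sum_sub_distrib, sum_inner, mul_sum]
    refine sum_congr rfl fun i _ => ?_
    rw [← mul_sub, twoDistancePoly_sub_neg, real_inner_smul_left]
    ring
  linarith [h y, h (-y), hℓ y]

theorem sum_mul_twoDistancePoly_apply_eq_single (hunit : ∀ i, ‖x i‖ = 1)
    (hip : ∀ i j, i ≠ j → ⟪x i, x j⟫ = a ∨ ⟪x i, x j⟫ = b) (c : ι → ℝ) (j : ι) :
    ∑ i, c i * twoDistancePoly a b (x i) (x j) = c j * ((1 - a) * (1 - b)) := by
  rw [Fintype.sum_eq_single j, twoDistancePoly_of_norm_eq_one _ _ _ (hunit j),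
    real_inner_self_eq_norm_sq, hunit j, one_pow]
  intro i hij
  rw [twoDistancePoly_of_norm_eq_one _ _ _ (hunit j)]
  rcases hip i j hij with h | h <;> simp [h]

theorem coeff_eq_zero_of_sum_twoDistancePoly_add_eq_zero (hunit : ∀ i, ‖x i‖ = 1)
    (hip : ∀ i j, i ≠ j → ⟪x i, x j⟫ = a ∨ ⟪x i, x j⟫ = b) (hab : 0 ≤ a + b)
    (hK : 0 < (1 - a) * (1 - b)) {c : ι → ℝ} {ℓ : E → ℝ} (hℓ : ∀ y, ℓ (-y) = -ℓ y)
    (h : ∀ y, ∑ i, c i * twoDistancePoly a b (x i) y + ℓ y = 0) : c = 0 := by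
  set e := ∑ i, c i • x i
  have hpoint : ∀ j, c j * ((1 - a) * (1 - b)) + (a + b) * ⟪e, x j⟫ = 0 := fun j => by
    rw [← sum_mul_twoDistancePoly_apply_eq_single hunit hip c j,
      ← eq_inner_of_sum_twoDistancePoly_add_eq_zero c hℓ h]
    exact h (x j)
  have hsum : (1 - a) * (1 - b) * ∑ j, c j ^ 2 + (a + b) * ⟪e, e⟫ = 0 := by
    have hee : ⟪e, e⟫ = ∑ j, c j * ⟪e, x j⟫ := by
      simp only [e, inner_sum, real_inner_smul_right]
    rw [hee, mul_sum, mul_sum, ← sum_add_distrib]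
    refine sum_eq_zero fun j _ => ?_
    linear_combination c j * hpoint j
  have hc2 : ∑ j, c j ^ 2 = 0 := by
    have he : 0 ≤ (a + b) * ⟪e, e⟫ := mul_nonneg hab real_inner_self_nonneg
    have hc : 0 ≤ ∑ j, c j ^ 2 := sum_nonneg fun j _ => sq_nonneg (c j)
    nlinarith
  ext j
  simpa using (sum_eq_zero_iff_of_nonneg fun j _ => sq_nonneg (c j)).mp hc2 j (mem_univ j)

theorem linearIndependent_sumElim_twoDistancePoly (hunit : ∀ i, ‖x i‖ = 1)
    (hip : ∀ i j, i ≠ j → ⟪x i, x j⟫ = a ∨ ⟪x i, x j⟫ = b) (hab : 0 ≤ a + b)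
    (hK : 0 < (1 - a) * (1 - b)) {κ : Type*} [Fintype κ] {f : κ → E → ℝ}
    (hf : LinearIndependent ℝ f) (hodd : ∀ k y, f k (-y) = -f k y) :
    LinearIndependent ℝ (Sum.elim (fun i => twoDistancePoly a b (x i)) f) := by
  rw [Fintype.linearIndependent_iff]
  intro g hg
  simp only [Fintype.sum_sum_type, Sum.elim_inl, Sum.elim_inr] at hg
  have hc : ∀ i, g (.inl i) = 0 := by
    refine congrFun (coeff_eq_zero_of_sum_twoDistancePoly_add_eq_zero hunit hip hab hK
      (ℓ := ∑ k, g (.inr k) • f k) (fun y => ?_) fun y => ?_)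
    · simp [hodd]
    · simpa using congrFun hg y
  have hd : ∀ k, g (.inr k) = 0 :=
    Fintype.linearIndependent_iff.mp hf _ (by simpa [hc] using hg)
  rintro (i | k)
  · exact hc i
  · exact hd k

end InnerProductSpace

section EuclideanSpace

variable {n : ℕ}

def coordFun (n : ℕ) (i : Fin n) (y : EuclideanSpace ℝ (Fin n)) : ℝ := y i

def quadMonomial (n : ℕ) : Sym2 (Fin n) → EuclideanSpace ℝ (Fin n) → ℝ :=
  Sym2.lift ⟨fun i j y => y i * y j, fun _ _ => funext fun _ => mul_comm _ _⟩

theorem twoDistancePoly_eq_sum (a b : ℝ) (x : EuclideanSpace ℝ (Fin n)) :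
    twoDistancePoly a b x = ∑ i, ∑ j, (x i * x j) • quadMonomial n s(i, j)
      + ∑ i, (a * b) • quadMonomial n s(i, i) + ∑ i, (-(a + b) * x i) • coordFun n i := by
  ext y
  have hinner : ∀ u v : EuclideanSpace ℝ (Fin n), ⟪u, v⟫ = ∑ i, u i * v i := fun u v => by
    simp [PiLp.inner_apply, mul_comm]
  simp only [twoDistancePoly, hinner, sq, sum_mul_sum, Pi.add_apply, Finset.sum_apply,
    Pi.smul_apply, smul_eq_mul, quadMonomial, Sym2.lift_mk, coordFun]
  rw [mul_sum, mul_sum]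
  have hquad : ∑ i, ∑ j, x i * y i * (x j * y j) = ∑ i, ∑ j, x i * x j * (y i * y j) :=
    sum_congr rfl fun _ _ => sum_congr rfl fun _ _ => by ring
  have hlin : ∑ i, (a + b) * (x i * y i) = -∑ i, -(a + b) * x i * y i := by
    rw [← sum_neg_distrib]
    exact sum_congr rfl fun _ _ => by ring
  linear_combination hquad - hlin

theorem twoDistancePoly_mem_span (a b : ℝ) (x : EuclideanSpace ℝ (Fin n)) :
    twoDistancePoly a b x ∈ Submodule.span ℝ
      (Set.range (Sum.elim (quadMonomial n) (coordFun n))) := by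
  have hquad : ∀ z, quadMonomial n z ∈ Submodule.span ℝ
      (Set.range (Sum.elim (quadMonomial n) (coordFun n))) :=
    fun z => Submodule.subset_span ⟨.inl z, rfl⟩
  rw [twoDistancePoly_eq_sum]
  refine add_mem (add_mem ?_ ?_) ?_ <;> refine sum_mem fun i _ => ?_
  · exact sum_mem fun j _ => Submodule.smul_mem _ _ (hquad _)
  · exact Submodule.smul_mem _ _ (hquad _)
  · exact Submodule.smul_mem _ _ (Submodule.subset_span ⟨.inr i, rfl⟩)

theorem range_sumElim_twoDistancePoly_subset_span {ι : Type*} (a b : ℝ)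
    (x : ι → EuclideanSpace ℝ (Fin n)) :
    Set.range (Sum.elim (fun i => twoDistancePoly a b (x i)) (coordFun n)) ⊆
      Submodule.span ℝ (Set.range (Sum.elim (quadMonomial n) (coordFun n))) := by
  rintro _ ⟨i | k, rfl⟩
  · exact twoDistancePoly_mem_span a b (x i)
  · exact Submodule.subset_span ⟨.inr k, rfl⟩

theorem linearIndependent_coordFun : LinearIndependent ℝ (coordFun n) := by
  rw [Fintype.linearIndependent_iff]
  intro g hg i
  simpa [coordFun] using congrFun hg (EuclideanSpace.single i 1)

end EuclideanSpace

theorem two_distance_set_bound_general {n : ℕ} (S : Finset (EuclideanSpace ℝ (Fin n))) (a b : ℝ)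
    (hba : b < a) (ha1 : a < 1) (hab : 0 ≤ a + b)
    (hunit : ∀ x ∈ S, ‖x‖ = 1)
    (hip : ∀ x ∈ S, ∀ y ∈ S, x ≠ y → ⟪x, y⟫ = a ∨ ⟪x, y⟫ = b) :
    S.card ≤ n * (n + 1) / 2 := by
  have hK : 0 < (1 - a) * (1 - b) := mul_pos (by linarith) (by linarith)
  have hli := linearIndependent_sumElim_twoDistancePoly (x := Subtype.val (p := (· ∈ S)))
    (fun x => hunit x x.2) (fun x y hxy => hip x x.2 y y.2 (Subtype.val_injective.ne hxy)) hab hK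
    linearIndependent_coordFun fun _ _ => rfl
  have hcard := hli.card_le_card_of_range_subset_span
    (range_sumElim_twoDistancePoly_subset_span a b _)
  simp only [Fintype.card_sum, Fintype.card_coe, Fintype.card_fin, Sym2.card,
    Nat.choose_two_right, add_tsub_cancel_right] at hcard
  rw [mul_comm]
  omega

/-- **Musin's theorem.**  A spherical two-distance set in `ℝⁿ` whose two inner products `a, b`
satisfy `a + b ≥ 0` has at most `n(n+1)/2` points. -/
theorem two_distance_set_bound {n : ℕ} (S : Finset (EuclideanSpace ℝ (Fin n))) (a b : ℝ)
    (hb1 : -1 ≤ b) (hba : b < a) (ha1 : a < 1) (hab : 0 ≤ a + b)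
    (hunit : ∀ x ∈ S, ‖x‖ = 1)
    (hip : ∀ x ∈ S, ∀ y ∈ S, x ≠ y → ⟪x, y⟫ = a ∨ ⟪x, y⟫ = b) :
    S.card ≤ n * (n + 1) / 2 :=
  two_distance_set_bound_general S a b hba ha1 hab hunit hip
end

section
/- The largest cardinality g(n) of a spherical two-distance set in ℝ^n satisfies g(n) ≤ n(n+3)/2. -/
/-!
For each `x ∈ S` the function `y ↦ (⟪x, y⟫ - a) (⟪x, y⟫ - b)` vanishes on `S \ {x}` but not at
`x`, as long as `a, b ≠ 1`; that can be arranged since distinct unit vectors never have inner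
product `1`. These `|S|` functions are therefore linearly independent. On the unit sphere the
constant term `a b` equals `a b ⟪y, y⟫`, so after this homogenization they all lie in the span of
the `n (n + 1) / 2` monomials `yᵢ yⱼ` and the `n` coordinates `yᵢ`, whence
`|S| ≤ n (n + 1) / 2 + n = n (n + 3) / 2`.
-/

open RealInnerProductSpace

theorem linearIndependent_of_eval_diagonal {K α ι : Type*} [Field K] {f : ι → α → K}
    (p : ι → α) (hdiag : ∀ i, f i (p i) ≠ 0) (hoff : ∀ i j, i ≠ j → f i (p j) = 0) :
    LinearIndependent K f := by
  rw [linearIndependent_iff']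
  intro s c hsum j hj
  have hsum_eval : ∑ i ∈ s, c i * f i (p j) = c j * f j (p j) :=
    Finset.sum_eq_single_of_mem j hj fun i _ hij => by rw [hoff i j hij, mul_zero]
  have hcj := congrFun hsum (p j)
  simp only [Finset.sum_apply, Pi.smul_apply, smul_eq_mul, Pi.zero_apply, hsum_eval] at hcj
  exact (mul_eq_zero.1 hcj).resolve_right (hdiag j)

theorem exists_inner_eq_ne_one_of_two_distance {E : Type*} [NormedAddCommGroup E]
    [InnerProductSpace ℝ E] {S : Set E} (hunit : ∀ x ∈ S, ‖x‖ = 1)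
    (h2 : ∃ a b : ℝ, ∀ x ∈ S, ∀ y ∈ S, x ≠ y → ⟪x, y⟫ = a ∨ ⟪x, y⟫ = b) :
    ∃ a b : ℝ, a ≠ 1 ∧ b ≠ 1 ∧ ∀ x ∈ S, ∀ y ∈ S, x ≠ y → ⟪x, y⟫ = a ∨ ⟪x, y⟫ = b := by
  obtain ⟨a, b, hab⟩ := h2
  refine ⟨if a = 1 then 0 else a, if b = 1 then 0 else b,
    by split_ifs with h; exacts [zero_ne_one, h], by split_ifs with h; exacts [zero_ne_one, h],
    fun x hx y hy hxy => ?_⟩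
  have hne : ⟪x, y⟫ ≠ 1 := mt (inner_eq_one_iff_of_norm_eq_one (hunit x hx) (hunit y hy)).1 hxy
  rcases hab x hx y hy hxy with h | h <;> simp [← h, hne]

theorem Fintype.card_sym2_sum_fin (n : ℕ) :
    Fintype.card (Sym2 (Fin n) ⊕ Fin n) = n * (n + 3) / 2 := by
  rw [Fintype.card_sum, Sym2.card, Fintype.card_fin, Nat.choose_two_right, Nat.add_sub_cancel,
    show n * (n + 3) = (n + 1) * n + n * 2 by ring, Nat.add_mul_div_right _ _ two_pos]

namespace EuclideanSpace

variable {ι : Type*} [Fintype ι]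

lemma real_inner_eq_sum (x y : EuclideanSpace ℝ ι) : ⟪x, y⟫ = ∑ i, x i * y i := by
  simp [PiLp.inner_apply, mul_comm]

def quadraticMonomial : Sym2 ι ⊕ ι → EuclideanSpace ℝ ι → ℝ :=
  Sum.elim (fun s y => Sym2.lift ⟨fun i j => y i * y j, fun _ _ => mul_comm _ _⟩ s)
    (fun i y => y i)

noncomputable def twoDistanceAnnihilator (a b : ℝ) (x : EuclideanSpace ℝ ι) :
    EuclideanSpace ℝ ι → ℝ :=
  fun y => ⟪x, y⟫ ^ 2 - (a + b) * ⟪x, y⟫ + a * b * ⟪y, y⟫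

lemma twoDistanceAnnihilator_apply_of_inner_self_eq_one {a b : ℝ} (x : EuclideanSpace ℝ ι)
    {y : EuclideanSpace ℝ ι} (hy : ⟪y, y⟫ = 1) :
    twoDistanceAnnihilator a b x y = (⟪x, y⟫ - a) * (⟪x, y⟫ - b) := by
  rw [twoDistanceAnnihilator, hy]
  ring

lemma twoDistanceAnnihilator_mem_span (a b : ℝ) (x : EuclideanSpace ℝ ι) :
    twoDistanceAnnihilator a b x ∈ Submodule.span ℝ (Set.range (quadraticMonomial (ι := ι))) := by
  set W := Submodule.span ℝ (Set.range (quadraticMonomial (ι := ι)))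
  have hprod (i j : ι) : (fun y : EuclideanSpace ℝ ι => y i * y j) ∈ W :=
    Submodule.subset_span ⟨Sum.inl s(i, j), rfl⟩
  have hcoord (i : ι) : (fun y : EuclideanSpace ℝ ι => y i) ∈ W :=
    Submodule.subset_span ⟨Sum.inr i, rfl⟩
  have hlin : (fun y => ⟪x, y⟫) ∈ W := by
    convert W.sum_mem fun i (_ : i ∈ Finset.univ) => W.smul_mem (x i) (hcoord i) using 1
    ext y
    simp [real_inner_eq_sum]
  have hsq : (fun y => ⟪x, y⟫ ^ 2) ∈ W := by
    convert W.sum_mem fun i (_ : i ∈ Finset.univ) => W.sum_mem fun j (_ : j ∈ Finset.univ) =>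
      W.smul_mem (x i * x j) (hprod i j) using 1
    ext y
    simp [real_inner_eq_sum, sq, Finset.sum_mul_sum, mul_mul_mul_comm]
  have hself : (fun y => ⟪y, y⟫) ∈ W := by
    convert W.sum_mem fun i (_ : i ∈ Finset.univ) => hprod i i using 1
    ext y
    simp only [real_inner_eq_sum, Finset.sum_apply]
  convert W.add_mem (W.sub_mem hsq (W.smul_mem (a + b) hlin)) (W.smul_mem (a * b) hself) using 1
  ext y
  simp [twoDistanceAnnihilator, mul_assoc]

theorem card_le_of_two_distance {S : Finset (EuclideanSpace ℝ ι)}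
    (hunit : ∀ x ∈ S, ‖x‖ = 1) {a b : ℝ} (ha : a ≠ 1) (hb : b ≠ 1)
    (hab : ∀ x ∈ S, ∀ y ∈ S, x ≠ y → ⟪x, y⟫ = a ∨ ⟪x, y⟫ = b) :
    S.card ≤ Fintype.card (Sym2 ι ⊕ ι) := by
  have hself (x : S) : ⟪(x : EuclideanSpace ℝ ι), x⟫ = 1 := by
    rw [real_inner_self_eq_norm_sq, hunit x x.2, one_pow]
  have hindep :
      LinearIndependent ℝ fun x : S => twoDistanceAnnihilator a b (x : EuclideanSpace ℝ ι) := by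
    refine linearIndependent_of_eval_diagonal (fun x : S => (x : EuclideanSpace ℝ ι))
      (fun x => ?_) fun x y hxy => ?_
    · rw [twoDistanceAnnihilator_apply_of_inner_self_eq_one _ (hself x), hself x]
      exact mul_ne_zero (sub_ne_zero.2 ha.symm) (sub_ne_zero.2 hb.symm)
    · rw [twoDistanceAnnihilator_apply_of_inner_self_eq_one _ (hself y)]
      rcases hab x x.2 y y.2 (Subtype.coe_injective.ne hxy) with h | h <;> simp [h]
  have := Module.Finite.span_of_finite ℝ (Set.finite_range (quadraticMonomial (ι := ι)))
  calc S.card = Fintype.card S := (Fintype.card_coe S).symm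
    _ = Module.finrank ℝ _ := (finrank_span_eq_card hindep).symm
    _ ≤ Module.finrank ℝ (Submodule.span ℝ (Set.range (quadraticMonomial (ι := ι)))) :=
      Submodule.finrank_mono <| Submodule.span_le.2 <| Set.range_subset_iff.2 fun x =>
        twoDistanceAnnihilator_mem_span a b (x : EuclideanSpace ℝ ι)
    _ ≤ Fintype.card (Sym2 ι ⊕ ι) := finrank_range_le_card _

end EuclideanSpace

/-- **Delsarte–Goethals–Seidel bound.**  Any spherical two-distance set in `ℝⁿ` has at most
`n(n+3)/2` points; hence `g(n) ≤ n(n+3)/2`. -/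
theorem two_distance_set_dgs_bound {n : ℕ} (S : Finset (EuclideanSpace ℝ (Fin n)))
    (hunit : ∀ x ∈ S, ‖x‖ = 1)
    (h2 : ∃ a b : ℝ, ∀ x ∈ S, ∀ y ∈ S, x ≠ y → ⟪x, y⟫ = a ∨ ⟪x, y⟫ = b) :
    S.card ≤ n * (n + 3) / 2 := by
  obtain ⟨a, b, ha, hb, hab⟩ := exists_inner_eq_ne_one_of_two_distance hunit h2
  calc S.card ≤ Fintype.card (Sym2 (Fin n) ⊕ Fin n) :=
        EuclideanSpace.card_le_of_two_distance hunit ha hb hab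
    _ = n * (n + 3) / 2 := Fintype.card_sym2_sum_fin n
end
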